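/- The immersion X(s,x) = (γ(s), √(P(γ(s)))·x) is Lagrangian for the standard symplectic form ω₀ = i Σ_j dz_j ∧ dz̄_j on ℂ^(n+1): the pullback X*ω₀ vanishes identically. -/
import Mathlib


/-- The standard symplectic form on `ℂ^m`. -/
noncomputable def omega0 {m : ℕ} (u w : Fin m → ℂ) : ℂ :=
  Complex.I * ∑ j, (u j * (starRingEnd ℂ) (w j) - w j * (starRingEnd ℂ) (u j))

/-- The ansatz `X(s,x) = (γ(s), √(P(γ(s)))·x)` is Lagrangian for the standard
symplectic form `ω₀` on `ℂ^(n+1)`: `ω₀` vanishes on all pairs of the tangent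
vectors `X_s = (γ', (γ' P'(γ)/(2√P)) x)` and `X_α = (0, √P v)`. -/
theorem stmt7 (n : ℕ) (P : Polynomial ℂ) (γ γ' w : ℂ) (hw : w ^ 2 = P.eval γ)
    (hw0 : w ≠ 0) (x v v' : Fin n → ℝ) (hx : ∑ j, x j ^ 2 = 1)
    (hv : ∑ j, x j * v j = 0) (hv' : ∑ j, x j * v' j = 0) :
    omega0
        (Fin.cons γ' fun j => γ' * (Polynomial.derivative P).eval γ / (2 * w) * x j)
        (Fin.cons 0 fun j => w * v j) = 0 ∧
    omega0 (Fin.cons (0 : ℂ) fun j => w * v j)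
        (Fin.cons 0 fun j => w * v' j) = 0 := by
  have hvc : (∑ j, (x j : ℂ) * v j) = 0 := by
    have := congrArg (Complex.ofReal) hv
    push_cast at this
    simpa using this
  set A : ℂ := γ' * (Polynomial.derivative P).eval γ / (2 * w) with hA
  constructor
  · simp only [omega0, Fin.sum_univ_succ, Fin.cons_zero, Fin.cons_succ, map_zero, map_mul,
      Complex.conj_ofReal, mul_zero, zero_mul, sub_zero, zero_sub]
    have : ∀ j : Fin n, A * x j * ((starRingEnd ℂ) w * v j) - w * v j * ((starRingEnd ℂ) A * x j)
        = (A * (starRingEnd ℂ) w - w * (starRingEnd ℂ) A) * ((x j : ℂ) * v j) := by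
      intro j; ring
    rw [Finset.sum_congr rfl fun j _ => this j, ← Finset.mul_sum, hvc, mul_zero]
    ring
  · simp only [omega0, Fin.sum_univ_succ, Fin.cons_zero, Fin.cons_succ, map_zero, map_mul,
      Complex.conj_ofReal, mul_zero, zero_mul, sub_zero, zero_sub]
    have : ∀ j : Fin n, w * v j * ((starRingEnd ℂ) w * v' j) - w * v' j * ((starRingEnd ℂ) w * v j)
        = 0 := by
      intro j; ring
    rw [Finset.sum_congr rfl fun j _ => this j, Finset.sum_const, smul_zero]
    ring
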